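/- Let M be a vertically 4-connected simple matroid with a triangle T = {a,b,c}, and let (X_a, Y_a) and (X_b, Y_b) be exact vertical 3-separations of M \ a and M \ b, respectively, with b ∈ X_a and a ∈ X_b. Then c ∈ Y_a ∩ Y_b. -/

import Mathlib

open Set Matroid

universe u

variable {α : Type u}

/-- The rank of a set `X` in a matroid `M`: the supremum of the cardinalities of the
independent subsets of `X`. -/
noncomputable def mrk (M : Matroid α) (X : Set α) : ℕ∞ :=
  ⨆ I ∈ {I : Set α | M.Indep I ∧ I ⊆ X}, I.encard

/-- The rank `r(M)` of a matroid `M`. -/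
noncomputable def mrank (M : Matroid α) : ℕ∞ := mrk M M.E

/-- The connectivity function `λ_M(X) = r(X) + r(E(M) - X) - r(M)`. -/
noncomputable def lam (M : Matroid α) (X : Set α) : ℕ∞ :=
  mrk M X + mrk M (M.E \ X) - mrank M

/-- The deletion `M \ D` of a set of elements `D` from `M`. -/
def mdel (M : Matroid α) (D : Set α) : Matroid α := M ↾ (M.E \ D)

/-- A circuit of a matroid: a minimal dependent set. -/
def MCircuit (M : Matroid α) (C : Set α) : Prop := M.Dep C ∧ ∀ D, D ⊂ C → M.Indep D

/-- A cocircuit of a matroid: a circuit of the dual matroid. -/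
def MCocircuit (M : Matroid α) (C : Set α) : Prop := MCircuit M✶ C

/-- A triangle: a 3-element circuit. -/
def IsTriangle (M : Matroid α) (T : Set α) : Prop := MCircuit M T ∧ T.encard = 3

/-- `(X, Y)` is a vertical `j`-separation of `M`: a partition of `E(M)` with
`λ_M(X) < j` and `min {r(X), r(Y)} ≥ j`. -/
def IsVSep (M : Matroid α) (j : ℕ) (X Y : Set α) : Prop :=
  X ∪ Y = M.E ∧ Disjoint X Y ∧ lam M X < (j : ℕ∞) ∧
    (j : ℕ∞) ≤ mrk M X ∧ (j : ℕ∞) ≤ mrk M Y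

/-- An exact vertical `j`-separation: one with `λ_M(X) = j - 1`. -/
def IsExactVSep (M : Matroid α) (j : ℕ) (X Y : Set α) : Prop :=
  IsVSep M j X Y ∧ lam M X = (j : ℕ∞) - 1

/-- `M` is vertically `k`-connected: it has no vertical `j`-separation for a
positive integer `j < k`. -/
def VertConn (M : Matroid α) (k : ℕ) : Prop :=
  ∀ j X Y, 0 < j → j < k → ¬ IsVSep M j X Y

/-- `(X, Y)` is a (Tutte) `j`-separation of `M`. -/
def IsSep (M : Matroid α) (j : ℕ) (X Y : Set α) : Prop :=
  X ∪ Y = M.E ∧ Disjoint X Y ∧ lam M X < (j : ℕ∞) ∧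
    (j : ℕ∞) ≤ X.encard ∧ (j : ℕ∞) ≤ Y.encard

/-- `M` is (Tutte) `k`-connected. -/
def TConn (M : Matroid α) (k : ℕ) : Prop :=
  ∀ j X Y, 0 < j → j < k → ¬ IsSep M j X Y

/-- `M` is minimally vertically 4-connected. -/
def MinVertConn4 (M : Matroid α) : Prop :=
  VertConn M 4 ∧ ∀ e ∈ M.E, ¬ VertConn (mdel M {e}) 4

/-- `M` is a simple matroid: every subset of the ground set with at most two
elements is independent (no loops and no parallel pairs). -/
def MSimple (M : Matroid α) : Prop := ∀ S ⊆ M.E, S.encard ≤ 2 → M.Indep S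

/-- `M` has a restriction isomorphic to `U_{2,4}`: a 4-element subset of the ground set
of rank 2, all of whose subsets with at most 2 elements are independent. -/
def HasU24Restriction (M : Matroid α) : Prop :=
  ∃ X ⊆ M.E, X.encard = 4 ∧ mrk M X = 2 ∧ ∀ S ⊆ X, S.encard ≤ 2 → M.Indep S

/-- The restriction `M|X` is isomorphic to `U_{2,4}`. -/
def RestrIsoU24 (M : Matroid α) (X : Set α) : Prop :=
  X ⊆ M.E ∧ X.encard = 4 ∧ mrk M X = 2 ∧ ∀ S ⊆ X, S.encard ≤ 2 → M.Indep S

/-- The restriction `M|C` is isomorphic to `U_{2,k} ⊕ U_{2,2}`: `C` is the disjoint union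
of a `k`-element rank-2 set `L` containing no loops or parallel pairs (a copy of `U_{2,k}`)
and a 2-element independent set `P` (a copy of `U_{2,2}`), with `r(C) = r(L) + r(P) = 4`,
so that the restriction is the direct sum of the two pieces. -/
def RestrIsoLinePlusPair (M : Matroid α) (C : Set α) (k : ℕ) : Prop :=
  ∃ L P, C = L ∪ P ∧ Disjoint L P ∧ L.encard = (k : ℕ∞) ∧ P.encard = 2 ∧
    M.Indep P ∧ mrk M L = 2 ∧ (∀ S ⊆ L, S.encard ≤ 2 → M.Indep S) ∧ mrk M C = 4

/-- The restriction `M|X` is isomorphic to the 2-sum `U_{2,4} ⊕₂ U_{2,4}`: `X` is the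
disjoint union of two 3-element circuits `T₁` and `T₂`, and the circuits of `M` contained
in `X` (i.e. the circuits of `M|X`) are exactly `T₁`, `T₂`, and the unions `P₁ ∪ P₂` of
2-element subsets `P₁ ⊆ T₁` and `P₂ ⊆ T₂`. -/
def RestrIsoTwoSumU24U24 (M : Matroid α) (X : Set α) : Prop :=
  X ⊆ M.E ∧ ∃ T₁ T₂ : Set α, Disjoint T₁ T₂ ∧ X = T₁ ∪ T₂ ∧
    T₁.encard = 3 ∧ T₂.encard = 3 ∧
    ∀ C ⊆ X, (MCircuit M C ↔ (C = T₁ ∨ C = T₂ ∨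
      ∃ P₁ P₂, P₁ ⊆ T₁ ∧ P₂ ⊆ T₂ ∧ P₁.encard = 2 ∧ P₂.encard = 2 ∧ C = P₁ ∪ P₂))

/-- The columns of the `GF(3)`-matrix representing `N₉`. -/
def N9Cols : Fin 9 → Fin 4 → ZMod 3 :=
  ![![1, 0, 0, 0], ![0, 1, 0, 0], ![0, 0, 1, 0], ![0, 0, 0, 1], ![0, 1, 1, -1],
    ![1, 0, 1, 1], ![1, 1, 0, 1], ![-1, 1, 1, 0], ![1, -1, 1, -1]]

/-- `M` is isomorphic to `N₉`, the 9-element rank-4 matroid represented over `GF(3)`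
by the matrix with columns `N9Cols`. -/
def IsoN9 (M : Matroid α) : Prop :=
  ∃ φ : α → Fin 9, Set.BijOn φ M.E Set.univ ∧
    ∀ I ⊆ M.E, (M.Indep I ↔ LinearIndependent (ZMod 3) fun x : I => N9Cols (φ x.1))

/-- `M` is binary: representable over the two-element field `GF(2)`, i.e. there is a
map from the ground set to a `GF(2)`-vector space under which independence in `M`
coincides with linear independence. -/
def IsBinary (M : Matroid α) : Prop :=
  ∃ (ι : Type u) (φ : α → ι → ZMod 2),
    ∀ I ⊆ M.E, (M.Indep I ↔ LinearIndependent (ZMod 2) fun x : I => φ x.1)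

/-- `M` is a uniform matroid, i.e. isomorphic to `U_{m,n}` for some `m` and `n`:
the ground set has `n` elements and a subset of the ground set is independent
exactly when it has at most `m` elements. -/
def IsUniform (M : Matroid α) : Prop :=
  ∃ m n : ℕ, M.E.encard = (n : ℕ∞) ∧ ∀ I ⊆ M.E, (M.Indep I ↔ I.encard ≤ (m : ℕ∞))

/-!
If `c` were on the same side `X_a` as `b`, the triangle would put `a` in the closure of `X_a`.
Putting `a` back on that side changes neither ranks nor connectivity, so `(X_a ∪ a, Y_a)` would be
a vertical 3-separation of `M`. The same argument with `a` and `b` swapped gives `c ∈ Y_b`.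
-/

variable {M : Matroid α} {X Y : Set α} {x : α}

lemma mrk_eq_eRk (M : Matroid α) (X : Set α) : mrk M X = M.eRk X := by
  obtain ⟨B, hB⟩ := M.exists_isBasis' X
  refine le_antisymm (iSup₂_le fun I hI ↦ hI.1.encard_le_eRk_of_subset hI.2) ?_
  rw [← hB.encard_eq_eRk]
  exact le_iSup₂ (f := fun I (_ : I ∈ {I | M.Indep I ∧ I ⊆ X}) ↦ I.encard) B
    ⟨hB.indep, hB.subset⟩

lemma mCircuit_iff_isCircuit {C : Set α} : MCircuit M C ↔ M.IsCircuit C := by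
  rw [isCircuit_iff_forall_ssubset]
  rfl

lemma mdel_ground (D : Set α) : (mdel M D).E = M.E \ D := rfl

lemma mrk_mdel {D : Set α} (hX : X ⊆ M.E \ D) : mrk (mdel M D) X = mrk M X := by
  rw [mrk_eq_eRk, mrk_eq_eRk, mdel, restrict_eRk_eq _ hX]

lemma eRk_insert_of_mem_closure (hx : x ∈ M.closure X) : M.eRk (insert x X) = M.eRk X := by
  rw [← eRk_closure_eq, closure_insert_eq_of_mem_closure hx, eRk_closure_eq]

lemma lam_insert_eq_lam_mdel (hxE : x ∈ M.E) (hX : X ⊆ M.E \ {x}) (hx : x ∈ M.closure X) :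
    lam M (insert x X) = lam (mdel M {x}) X := by
  have hrank : mrank (mdel M {x}) = mrank M := by
    have hx' : x ∈ M.closure (M.E \ {x}) := M.closure_subset_closure hX hx
    rw [mrank, mrank, mdel_ground, mrk_mdel subset_rfl, mrk_eq_eRk, mrk_eq_eRk,
      ← eRk_insert_of_mem_closure hx', insert_sdiff_singleton, insert_eq_of_mem hxE]
  rw [lam, lam, hrank, mdel_ground, insert_eq, ← sdiff_sdiff, ← insert_eq, mrk_mdel hX,
    mrk_mdel sdiff_subset, mrk_eq_eRk M (insert x X), eRk_insert_of_mem_closure hx, ← mrk_eq_eRk]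

lemma IsVSep.insert_of_mem_closure {j : ℕ} (h : IsVSep (mdel M {x}) j X Y) (hxE : x ∈ M.E)
    (hx : x ∈ M.closure X) : IsVSep M j (insert x X) Y := by
  obtain ⟨hXY, hdisj, hlam, hrX, hrY⟩ := h
  have hXYE : X ∪ Y = M.E \ {x} := hXY
  have hX : X ⊆ M.E \ {x} := hXYE ▸ subset_union_left
  have hY : Y ⊆ M.E \ {x} := hXYE ▸ subset_union_right
  refine ⟨?_, disjoint_insert_left.2 ⟨fun hxY ↦ (hY hxY).2 rfl, hdisj⟩, ?_, ?_, ?_⟩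
  · rw [insert_union, hXYE, insert_sdiff_singleton, insert_eq_of_mem hxE]
  · rwa [lam_insert_eq_lam_mdel hxE hX hx]
  · rwa [mrk_eq_eRk, eRk_insert_of_mem_closure hx, ← mrk_eq_eRk, ← mrk_mdel hX]
  · rwa [← mrk_mdel hY]

lemma VertConn.mem_of_isVSep_mdel_of_isCircuit (hM : VertConn M 4) {y z : α}
    (hC : M.IsCircuit {x, y, z}) (h : IsVSep (mdel M {x}) 3 X Y) (hy : y ∈ X) : z ∈ Y := by
  by_contra hzY
  have hCX : {x, y, z} \ {x} ⊆ X := by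
    rintro w ⟨rfl | rfl | rfl, hwx⟩
    · exact absurd rfl hwx
    · exact hy
    · have hwE : w ∈ (mdel M {x}).E := ⟨hC.subset_ground (by simp), hwx⟩
      exact (h.1 ▸ hwE).resolve_right hzY
  have hx : x ∈ M.closure X :=
    M.closure_subset_closure hCX (hC.mem_closure_sdiff_singleton_of_mem (mem_insert _ _))
  exact hM 3 _ _ (by norm_num) (by norm_num)
    (h.insert_of_mem_closure (hC.subset_ground (mem_insert _ _)) hx)

theorem statement_8_general (M : Matroid α) (hM : VertConn M 4)
    (a b c : α) (hT : IsTriangle M {a, b, c}) (Xa Ya Xb Yb : Set α)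
    (ha : IsExactVSep (mdel M {a}) 3 Xa Ya) (hb : IsExactVSep (mdel M {b}) 3 Xb Yb)
    (hbXa : b ∈ Xa) (haXb : a ∈ Xb) :
    c ∈ Ya ∩ Yb := by
  have hC : M.IsCircuit {a, b, c} := mCircuit_iff_isCircuit.1 hT.1
  exact ⟨hM.mem_of_isVSep_mdel_of_isCircuit hC ha.1 hbXa,
    hM.mem_of_isVSep_mdel_of_isCircuit (insert_comm a b {c} ▸ hC) hb.1 haXb⟩

/-- In the setting of the technical lemma, `c ∈ Y_a ∩ Y_b`. -/
theorem statement_8 (M : Matroid α) (hM : VertConn M 4) (hs : MSimple M)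
    (a b c : α) (hT : IsTriangle M {a, b, c}) (Xa Ya Xb Yb : Set α)
    (ha : IsExactVSep (mdel M {a}) 3 Xa Ya) (hb : IsExactVSep (mdel M {b}) 3 Xb Yb)
    (hbXa : b ∈ Xa) (haXb : a ∈ Xb) :
    c ∈ Ya ∩ Yb :=
  statement_8_general M hM a b c hT Xa Ya Xb Yb ha hb hbXa haXb
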